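/- arXiv:1811.06941 — 3 statements merged into one kernel-verified Lean document; each statement's English description precedes it below -/
import Mathlib

section
/- Let V be a finite-dimensional real inner product space with symmetric positive definite bilinear form a, inducing operator S via ⟨S v, w⟩ = a(v,w). Let V₀, …, V_J be finite-dimensional spaces with SPD bilinear forms a_j inducing operators S_j, and linear maps R_j : V_j → V with V = Σ_j R_j V_j. Define the additive Schwarz preconditioner B = Σ_j R_j S_j^{-1} R_jᵗ. Then λ_min(BS) = min_{v≠0} a(v,v) / ( min over decompositions v = Σ_j R_j v_j of Σ_j a_j(v_j, v_j) ). -/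
/-!
Let `A = B⁻¹`. By Lions' lemma the least energy of a decomposition of `v` is `⟪A v, v⟫`, attained
at `uⱼ = Sⱼ⁻¹ Rⱼᵗ A v`: the energy of any other decomposition exceeds it by the energy of the
difference. So `a(v, v)` over the least energy is the generalized Rayleigh quotient
`⟪S v, v⟫ / ⟪A v, v⟫`, and the pairs with `S v = μ A v` are exactly the eigenpairs of `BS`.
Each eigenvector of `BS` realizes its eigenvalue as such a quotient. Conversely the quotient
attains its minimum `μ` on the unit sphere, and there the positive semidefinite form of `S - μ A`
vanishes, so `S v = μ A v` and `μ` is an eigenvalue of `BS`.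
-/

open scoped RealInnerProductSpace

open Module.End

theorem Module.End.hasEigenvector_comp_iff {K M : Type*} [Field K] [AddCommGroup M] [Module K M]
    {T T' : M →ₗ[K] M} (h : T' ∘ₗ T = LinearMap.id) (h' : T ∘ₗ T' = LinearMap.id)
    (S : M →ₗ[K] M) {μ : K} {x : M} :
    HasEigenvector (T ∘ₗ S) μ x ↔ S x = μ • T' x ∧ x ≠ 0 := by
  rw [hasEigenvector_iff, mem_eigenspace_iff, LinearMap.comp_apply]
  refine and_congr_left' ⟨fun hx => ?_, fun hx => ?_⟩
  · rw [← map_smul, ← hx, ← LinearMap.comp_apply T', h, LinearMap.id_apply]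
  · rw [hx, map_smul, ← LinearMap.comp_apply T, h', LinearMap.id_apply]

namespace LinearMap

variable {E : Type*} [NormedAddCommGroup E] [InnerProductSpace ℝ E]

section RightInverse

variable {T T' : E →ₗ[ℝ] E}

theorem IsSymmetric.of_comp_eq_id (hT : T.IsSymmetric) (h : T ∘ₗ T' = id) :
    T'.IsSymmetric := fun x y => by
  have hTT' (z : E) : T (T' z) = z := congr($h z)
  calc ⟪T' x, y⟫ = ⟪T' x, T (T' y)⟫ := by rw [hTT']
    _ = ⟪x, T' y⟫ := by rw [← hT, hTT']

theorem inner_pos_of_comp_eq_id (hT : ∀ x ≠ 0, 0 < ⟪T x, x⟫) (h : T ∘ₗ T' = id) :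
    ∀ x ≠ 0, 0 < ⟪T' x, x⟫ := fun x hx => by
  have hTT' (z : E) : T (T' z) = z := congr($h z)
  have hT'x : T' x ≠ 0 := fun h0 => hx (by rw [← hTT' x, h0, map_zero])
  simpa [hTT', real_inner_comm] using hT _ hT'x

end RightInverse

theorem injective_of_inner_pos {T : E →ₗ[ℝ] E} (hT : ∀ x ≠ 0, 0 < ⟪T x, x⟫) :
    Function.Injective T := by
  rw [← ker_eq_bot, ker_eq_bot']
  intro x hx
  by_contra h
  simpa [hx] using hT x h

theorem IsSymmetric.apply_eq_zero_of_inner_self_eq_zero {T : E →ₗ[ℝ] E} (hT : T.IsSymmetric)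
    (hT₀ : ∀ w, 0 ≤ ⟪T w, w⟫) {v : E} (hv : ⟪T v, v⟫ = 0) : T v = 0 := by
  suffices ∀ w, ⟪T v, w⟫ = 0 from inner_self_eq_zero.mp (this _)
  intro w
  -- `t ↦ ⟪T (t • w + v), t • w + v⟫` is a nonnegative quadratic without constant term, so its
  -- linear coefficient vanishes
  have hquad (t : ℝ) : 0 ≤ ⟪T w, w⟫ * (t * t) + 2 * ⟪T v, w⟫ * t + 0 := by
    have := hT₀ (t • w + v)
    simp only [map_add, map_smul, inner_add_left, inner_add_right, real_inner_smul_left,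
      real_inner_smul_right] at this
    rw [hT w v, real_inner_comm (T v) w, hv] at this
    linarith
  have := discrim_le_zero hquad
  rw [discrim] at this
  nlinarith [sq_nonneg ⟪T v, w⟫]

end LinearMap

section Rayleigh

variable {E : Type*} [NormedAddCommGroup E] [InnerProductSpace ℝ E]

theorem inner_smul_div_inner_smul (S A : E →ₗ[ℝ] E) (x : E) {c : ℝ} (hc : c ≠ 0) :
    ⟪S (c • x), c • x⟫ / ⟪A (c • x), c • x⟫ = ⟪S x, x⟫ / ⟪A x, x⟫ := by
  simp only [map_smul, real_inner_smul_left, real_inner_smul_right, ← mul_assoc]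
  exact mul_div_mul_left _ _ (mul_ne_zero hc hc)

theorem exists_forall_inner_div_inner_le [FiniteDimensional ℝ E] [Nontrivial E]
    (S : E →ₗ[ℝ] E) {A : E →ₗ[ℝ] E} (hA : ∀ x ≠ 0, 0 < ⟪A x, x⟫) :
    ∃ x₀ ≠ 0, ∀ x ≠ 0, ⟪S x₀, x₀⟫ / ⟪A x₀, x₀⟫ ≤ ⟪S x, x⟫ / ⟪A x, x⟫ := by
  have hS_cont := S.continuous_of_finiteDimensional
  have hA_cont := A.continuous_of_finiteDimensional
  have hcont : ContinuousOn (fun x => ⟪S x, x⟫ / ⟪A x, x⟫) (Metric.sphere 0 1) :=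
    ContinuousOn.div (by fun_prop) (by fun_prop) fun x hx =>
      (hA x (ne_zero_of_mem_unit_sphere ⟨x, hx⟩)).ne'
  obtain ⟨x₀, hx₀, hmin⟩ := (isCompact_sphere (0 : E) 1).exists_isMinOn
    (NormedSpace.sphere_nonempty.2 zero_le_one) hcont
  refine ⟨x₀, ne_zero_of_mem_unit_sphere ⟨x₀, hx₀⟩, fun x hx => ?_⟩
  have hnorm : ‖x‖⁻¹ ≠ 0 := inv_ne_zero (norm_ne_zero_iff.2 hx)
  rw [← inner_smul_div_inner_smul S A x hnorm]
  exact hmin (by simp [norm_smul, hx])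

theorem exists_eq_smul_forall_le_inner_div_inner [FiniteDimensional ℝ E] [Nontrivial E]
    {S A : E →ₗ[ℝ] E} (hS : S.IsSymmetric) (hA : A.IsSymmetric)
    (hA_pos : ∀ x ≠ 0, 0 < ⟪A x, x⟫) :
    ∃ x₀ ≠ 0, ∃ μ : ℝ, S x₀ = μ • A x₀ ∧ ∀ x ≠ 0, μ ≤ ⟪S x, x⟫ / ⟪A x, x⟫ := by
  obtain ⟨x₀, hx₀, hmin⟩ := exists_forall_inner_div_inner_le S hA_pos
  set μ := ⟪S x₀, x₀⟫ / ⟪A x₀, x₀⟫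
  have hT : (S - μ • A).IsSymmetric := hS.sub (hA.smul (conj_trivial μ))
  have hT_nonneg (x : E) : 0 ≤ ⟪(S - μ • A) x, x⟫ := by
    rcases eq_or_ne x 0 with rfl | hx
    · simp
    have := (le_div_iff₀ (hA_pos x hx)).1 (hmin x hx)
    simp only [LinearMap.sub_apply, LinearMap.smul_apply, inner_sub_left, real_inner_smul_left]
    linarith
  have hT_x₀ : ⟪(S - μ • A) x₀, x₀⟫ = 0 := by
    simp only [LinearMap.sub_apply, LinearMap.smul_apply, inner_sub_left, real_inner_smul_left, μ]
    rw [div_mul_cancel₀ _ (hA_pos x₀ hx₀).ne', sub_self]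
  refine ⟨x₀, hx₀, μ, ?_, hmin⟩
  exact sub_eq_zero.1 (hT.apply_eq_zero_of_inner_self_eq_zero hT_nonneg hT_x₀)

end Rayleigh

section AdditiveSchwarz

variable {ι V : Type*} [Fintype ι] [NormedAddCommGroup V] [InnerProductSpace ℝ V]
  [FiniteDimensional ℝ V] {W : ι → Type*} [∀ j, NormedAddCommGroup (W j)]
  [∀ j, InnerProductSpace ℝ (W j)] [∀ j, FiniteDimensional ℝ (W j)]

noncomputable def additiveSchwarz (Sinv : ∀ j, W j →ₗ[ℝ] W j) (R : ∀ j, W j →ₗ[ℝ] V) :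
    V →ₗ[ℝ] V :=
  ∑ j, R j ∘ₗ Sinv j ∘ₗ LinearMap.adjoint (R j)

def decompositionEnergies (S : ∀ j, W j →ₗ[ℝ] W j) (R : ∀ j, W j →ₗ[ℝ] V) (v : V) : Set ℝ :=
  {t | ∃ u : ∀ j, W j, ∑ j, R j (u j) = v ∧ t = ∑ j, ⟪S j (u j), u j⟫}

variable {Sinv : ∀ j, W j →ₗ[ℝ] W j} {R : ∀ j, W j →ₗ[ℝ] V}

theorem additiveSchwarz_apply (v : V) :
    additiveSchwarz Sinv R v = ∑ j, R j (Sinv j (LinearMap.adjoint (R j) v)) := by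
  simp [additiveSchwarz]

theorem inner_additiveSchwarz_apply (v w : V) :
    ⟪additiveSchwarz Sinv R v, w⟫ =
      ∑ j, ⟪Sinv j (LinearMap.adjoint (R j) v), LinearMap.adjoint (R j) w⟫ := by
  rw [additiveSchwarz_apply, sum_inner]
  exact Finset.sum_congr rfl fun j _ => (LinearMap.adjoint_inner_right _ _ _).symm

theorem isSymmetric_additiveSchwarz (hSinv : ∀ j, (Sinv j).IsSymmetric) :
    (additiveSchwarz Sinv R).IsSymmetric :=
  LinearMap.isSymmetric_sum _ fun j _ => (hSinv j).conj_adjoint (R j)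

omit [Fintype ι] in
theorem exists_adjoint_apply_ne_zero (hR : ⨆ j, LinearMap.range (R j) = ⊤) {v : V} (hv : v ≠ 0) :
    ∃ j, LinearMap.adjoint (R j) v ≠ 0 := by
  by_contra! h
  have : v ∈ (⨆ j, LinearMap.range (R j))ᗮ := by
    rw [← Submodule.iInf_orthogonal, Submodule.mem_iInf]
    rintro j _ ⟨u, rfl⟩
    rw [← LinearMap.adjoint_inner_right, h j, inner_zero_right]
  rw [hR, Submodule.top_orthogonal_eq_bot] at this
  exact hv this

theorem inner_additiveSchwarz_self_pos (hSinv : ∀ j, ∀ x ≠ 0, 0 < ⟪Sinv j x, x⟫)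
    (hR : ⨆ j, LinearMap.range (R j) = ⊤) {v : V} (hv : v ≠ 0) :
    0 < ⟪additiveSchwarz Sinv R v, v⟫ := by
  have hterm (j : ι) : 0 ≤ ⟪Sinv j (LinearMap.adjoint (R j) v), LinearMap.adjoint (R j) v⟫ := by
    rcases eq_or_ne (LinearMap.adjoint (R j) v) 0 with h | h
    · simp [h]
    · exact (hSinv j _ h).le
  obtain ⟨j, hj⟩ := exists_adjoint_apply_ne_zero hR hv
  rw [inner_additiveSchwarz_apply]
  exact (Finset.sum_pos_iff_of_nonneg fun j _ => hterm j).2 ⟨j, Finset.mem_univ j, hSinv j _ hj⟩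

theorem isLeast_decompositionEnergies {S : ∀ j, W j →ₗ[ℝ] W j}
    (hS : ∀ j, (S j).IsSymmetric) (hS_nonneg : ∀ j x, 0 ≤ ⟪S j x, x⟫)
    (hSinv : ∀ j, S j ∘ₗ Sinv j = LinearMap.id) {v w : V} (hw : additiveSchwarz Sinv R w = v) :
    IsLeast (decompositionEnergies S R v) ⟪w, v⟫ := by
  set u₀ : ∀ j, W j := fun j => Sinv j (LinearMap.adjoint (R j) w)
  have hu₀ : ∑ j, R j (u₀ j) = v := by rw [← hw, additiveSchwarz_apply]
  have hSu₀ (j : ι) : S j (u₀ j) = LinearMap.adjoint (R j) w := LinearMap.congr_fun (hSinv j) _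
  -- `u₀` pairs with every decomposition of `v` to `⟪w, v⟫`
  have hpair (u : ∀ j, W j) (hu : ∑ j, R j (u j) = v) : ∑ j, ⟪S j (u₀ j), u j⟫ = ⟪w, v⟫ := by
    simp only [hSu₀, ← hu, inner_sum, LinearMap.adjoint_inner_left]
  refine ⟨⟨u₀, hu₀, (hpair u₀ hu₀).symm⟩, ?_⟩
  rintro _ ⟨u, hu, rfl⟩
  have hdiff : ∑ j, ⟪S j (u j - u₀ j), u j - u₀ j⟫ = ∑ j, ⟪S j (u j), u j⟫ - ⟪w, v⟫ := by
    have hsymm (j : ι) : ⟪S j (u j), u₀ j⟫ = ⟪S j (u₀ j), u j⟫ := by rw [hS, real_inner_comm]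
    simp only [map_sub, inner_sub_left, inner_sub_right, Finset.sum_sub_distrib, hsymm,
      hpair u hu, hpair u₀ hu₀]
    ring
  linarith [Finset.sum_nonneg fun j (_ : j ∈ Finset.univ) => hS_nonneg j (u j - u₀ j)]

end AdditiveSchwarz

theorem stmt_8_general {V : Type*} [NormedAddCommGroup V] [InnerProductSpace ℝ V]
    [FiniteDimensional ℝ V]
    {J : ℕ} (Vj : Fin J → Type*) [∀ j, NormedAddCommGroup (Vj j)]
    [∀ j, InnerProductSpace ℝ (Vj j)] [∀ j, FiniteDimensional ℝ (Vj j)]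
    (S : V →ₗ[ℝ] V)
    (hSsa : ∀ v w : V, ⟪S v, w⟫ = ⟪v, S w⟫)
    (Sj Sjinv : ∀ j, Vj j →ₗ[ℝ] Vj j)
    (hSjsa : ∀ j (x y : Vj j), ⟪Sj j x, y⟫ = ⟪x, Sj j y⟫)
    (hSjpd : ∀ j (x : Vj j), x ≠ 0 → 0 < ⟪Sj j x, x⟫)
    (hSjinv₂ : ∀ j, Sj j ∘ₗ Sjinv j = LinearMap.id)
    (R : ∀ j, Vj j →ₗ[ℝ] V)
    (hspan : (⨆ j, LinearMap.range (R j)) = ⊤)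
    (B : V →ₗ[ℝ] V)
    (hB : B = ∑ j, (R j) ∘ₗ (Sjinv j) ∘ₗ (LinearMap.adjoint (R j)))
    (lammin : ℝ)
    (hmin : IsLeast {μ : ℝ | Module.End.HasEigenvalue (B ∘ₗ S) μ} lammin) :
    IsLeast {r : ℝ | ∃ v : V, v ≠ 0 ∧ ∃ m : ℝ,
      IsLeast {t : ℝ | ∃ u : ∀ j, Vj j,
        (∑ j, R j (u j)) = v ∧ t = ∑ j, ⟪Sj j (u j), u j⟫} m ∧
      r = ⟪S v, v⟫ / m} lammin := by
  change B = additiveSchwarz Sjinv R at hB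
  have hSj_nonneg (j) (x : Vj j) : 0 ≤ ⟪Sj j x, x⟫ :=
    (eq_or_ne x 0).elim (fun hx => by simp [hx]) fun hx => (hSjpd j x hx).le
  have hB_symm : B.IsSymmetric :=
    hB ▸ isSymmetric_additiveSchwarz fun j => .of_comp_eq_id (hSjsa j) (hSjinv₂ j)
  have hB_pos : ∀ v ≠ 0, 0 < ⟪B v, v⟫ := hB ▸ fun _ => inner_additiveSchwarz_self_pos
    (fun j => LinearMap.inner_pos_of_comp_eq_id (hSjpd j) (hSjinv₂ j)) hspan
  have hB_inj := LinearMap.injective_of_inner_pos hB_pos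
  set A : V →ₗ[ℝ] V := ↑(LinearEquiv.ofInjectiveEndo B hB_inj).symm
  have hAB : A ∘ₗ B = LinearMap.id := LinearEquiv.ofInjectiveEndo_left_inv B hB_inj
  have hBA : B ∘ₗ A = LinearMap.id := LinearEquiv.ofInjectiveEndo_right_inv B hB_inj
  have hA_pos := LinearMap.inner_pos_of_comp_eq_id hB_pos hBA
  have henergy (v : V) : IsLeast (decompositionEnergies Sj R v) ⟪A v, v⟫ :=
    isLeast_decompositionEnergies hSjsa hSj_nonneg hSjinv₂ (hB ▸ LinearMap.congr_fun hBA v)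
  obtain ⟨v₀, hv₀⟩ := hmin.1.exists_hasEigenvector
  obtain ⟨hSv₀, hv₀_ne⟩ := (hasEigenvector_comp_iff hAB hBA S).1 hv₀
  have : Nontrivial V := nontrivial_of_ne v₀ 0 hv₀_ne
  obtain ⟨w, hw, μ, hSw, hμ_le⟩ :=
    exists_eq_smul_forall_le_inner_div_inner hSsa (hB_symm.of_comp_eq_id hBA) hA_pos
  have hμ : HasEigenvalue (B ∘ₗ S) μ :=
    hasEigenvalue_of_hasEigenvector ((hasEigenvector_comp_iff hAB hBA S).2 ⟨hSw, hw⟩)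
  refine ⟨⟨v₀, hv₀_ne, _, henergy v₀, ?_⟩, ?_⟩
  · rw [hSv₀, real_inner_smul_left, mul_div_cancel_right₀ _ (hA_pos v₀ hv₀_ne).ne']
  · rintro r ⟨v, hv, m, hm, rfl⟩
    rw [hm.unique (henergy v)]
    exact (hmin.2 hμ).trans (hμ_le v hv)

/-- additive Schwarz lemma: the minimal eigenvalue of BS is
characterized by λ_min(BS) = min_{v≠0} a(v,v) / min_{v = Σ Rⱼ vⱼ} Σ aⱼ(vⱼ,vⱼ). -/
theorem stmt_8 {V : Type*} [NormedAddCommGroup V] [InnerProductSpace ℝ V]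
    [FiniteDimensional ℝ V]
    {J : ℕ} (Vj : Fin J → Type*) [∀ j, NormedAddCommGroup (Vj j)]
    [∀ j, InnerProductSpace ℝ (Vj j)] [∀ j, FiniteDimensional ℝ (Vj j)]
    (S : V →ₗ[ℝ] V)
    (hSsa : ∀ v w : V, ⟪S v, w⟫ = ⟪v, S w⟫) (hSpd : ∀ v : V, v ≠ 0 → 0 < ⟪S v, v⟫)
    (Sj Sjinv : ∀ j, Vj j →ₗ[ℝ] Vj j)
    (hSjsa : ∀ j (x y : Vj j), ⟪Sj j x, y⟫ = ⟪x, Sj j y⟫)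
    (hSjpd : ∀ j (x : Vj j), x ≠ 0 → 0 < ⟪Sj j x, x⟫)
    (hSjinv₁ : ∀ j, Sjinv j ∘ₗ Sj j = LinearMap.id)
    (hSjinv₂ : ∀ j, Sj j ∘ₗ Sjinv j = LinearMap.id)
    (R : ∀ j, Vj j →ₗ[ℝ] V)
    (hspan : (⨆ j, LinearMap.range (R j)) = ⊤)
    (B : V →ₗ[ℝ] V)
    (hB : B = ∑ j, (R j) ∘ₗ (Sjinv j) ∘ₗ (LinearMap.adjoint (R j)))
    (lammin : ℝ)
    (hmin : IsLeast {μ : ℝ | Module.End.HasEigenvalue (B ∘ₗ S) μ} lammin) :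
    IsLeast {r : ℝ | ∃ v : V, v ≠ 0 ∧ ∃ m : ℝ,
      IsLeast {t : ℝ | ∃ u : ∀ j, Vj j,
        (∑ j, R j (u j)) = v ∧ t = ∑ j, ⟪Sj j (u j), u j⟫} m ∧
      r = ⟪S v, v⟫ / m} lammin :=
  stmt_8_general Vj S hSsa Sj Sjinv hSjsa hSjpd hSjinv₂ R hspan B hB lammin hmin
end

section
/- In the additive Schwarz setting, if for every v ∈ V there exists a decomposition v = Σ_j R_j v_j with Σ_j a_j(v_j,v_j) ≤ C₁ a(v,v), then λ_min(BS) ≥ 1/C₁. -/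
open scoped RealInnerProductSpace

/-!
Let `μ` be an eigenvalue of `BS` with eigenvector `v`, and let `v = ∑ⱼ Rⱼ uⱼ` be a stable
decomposition. With `wⱼ := Sⱼ⁻¹ Rⱼᵗ S v` we have `∑ⱼ aⱼ(wⱼ, xⱼ) = a(v, ∑ⱼ Rⱼ xⱼ)` for every
family `x`, so `a(v, v) = ∑ⱼ aⱼ(wⱼ, uⱼ)` and `∑ⱼ aⱼ(wⱼ, wⱼ) = a(v, BSv) = μ a(v, v)`.
Cauchy–Schwarz for the form `∑ⱼ aⱼ` on `∏ⱼ Vⱼ` then gives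
`a(v, v)² ≤ μ a(v, v) · C₁ a(v, v)`, i.e. `1 ≤ μ C₁`.
-/

section PiForm

variable {ι : Type*} [Fintype ι] {E : ι → Type*} [∀ j, NormedAddCommGroup (E j)]
  [∀ j, InnerProductSpace ℝ (E j)]

noncomputable def piEnergyForm (A : ∀ j, E j →ₗ[ℝ] E j) : LinearMap.BilinForm ℝ (∀ j, E j) :=
  ∑ j, (innerₗ (E j)).compl₁₂ (A j ∘ₗ LinearMap.proj j) (LinearMap.proj j)

@[simp]
lemma piEnergyForm_apply (A : ∀ j, E j →ₗ[ℝ] E j) (x y : ∀ j, E j) :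
    piEnergyForm A x y = ∑ j, ⟪A j (x j), y j⟫ := by
  simp [piEnergyForm]

lemma sum_inner_sq_le_of_isPositive {A : ∀ j, E j →ₗ[ℝ] E j} (hA : ∀ j, (A j).IsPositive)
    (x y : ∀ j, E j) :
    (∑ j, ⟪A j (x j), y j⟫) ^ 2 ≤ (∑ j, ⟪A j (x j), x j⟫) * ∑ j, ⟪A j (y j), y j⟫ := by
  have hsymm : LinearMap.IsSymm (piEnergyForm A) := LinearMap.isSymm_def.mpr fun x y => by
    simp only [piEnergyForm_apply, RingHom.id_apply]
    refine Finset.sum_congr rfl fun j _ => ?_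
    rw [(hA j).isSymmetric, real_inner_comm]
  simpa using (piEnergyForm A).apply_sq_le_of_symm
    (fun x => by simpa using Finset.sum_nonneg fun j _ => (hA j).inner_nonneg_left (x j))
    hsymm x y

end PiForm

section AdditiveSchwarz

variable {ι : Type*} [Fintype ι] {V : Type*} [NormedAddCommGroup V] [InnerProductSpace ℝ V]
  [FiniteDimensional ℝ V] {Vj : ι → Type*} [∀ j, NormedAddCommGroup (Vj j)]
  [∀ j, InnerProductSpace ℝ (Vj j)] [∀ j, FiniteDimensional ℝ (Vj j)]
  {Sj Sjinv : ∀ j, Vj j →ₗ[ℝ] Vj j} {R : ∀ j, Vj j →ₗ[ℝ] V}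

lemma sum_inner_localCorrection (hSjinv : ∀ j, Sj j ∘ₗ Sjinv j = LinearMap.id) (y : V)
    (x : ∀ j, Vj j) :
    ∑ j, ⟪Sj j (Sjinv j (LinearMap.adjoint (R j) y)), x j⟫ = ⟪y, ∑ j, R j (x j)⟫ := by
  rw [inner_sum]
  refine Finset.sum_congr rfl fun j _ => ?_
  rw [← LinearMap.comp_apply (Sj j), hSjinv j, LinearMap.id_apply,
    LinearMap.adjoint_inner_left]

lemma inner_sq_le_inner_preconditioner_mul (hSj : ∀ j, (Sj j).IsPositive)
    (hSjinv : ∀ j, Sj j ∘ₗ Sjinv j = LinearMap.id) (y : V) {u : ∀ j, Vj j} {E : ℝ}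
    (hu : ∑ j, ⟪Sj j (u j), u j⟫ ≤ E) :
    ⟪y, ∑ j, R j (u j)⟫ ^ 2
      ≤ ⟪y, (∑ j, R j ∘ₗ Sjinv j ∘ₗ LinearMap.adjoint (R j)) y⟫ * E := by
  set w : ∀ j, Vj j := fun j => Sjinv j (LinearMap.adjoint (R j) y)
  have hBy : (∑ j, R j ∘ₗ Sjinv j ∘ₗ LinearMap.adjoint (R j)) y = ∑ j, R j (w j) := by
    simp [w]
  have hw : ∀ x : ∀ j, Vj j, ∑ j, ⟪Sj j (w j), x j⟫ = ⟪y, ∑ j, R j (x j)⟫ :=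
    sum_inner_localCorrection hSjinv y
  have hww : 0 ≤ ∑ j, ⟪Sj j (w j), w j⟫ :=
    Finset.sum_nonneg fun j _ => (hSj j).inner_nonneg_left (w j)
  rw [hBy, ← hw, ← hw]
  exact (sum_inner_sq_le_of_isPositive hSj w u).trans (mul_le_mul_of_nonneg_left hu hww)

end AdditiveSchwarz

theorem stmt_10_general {V : Type*} [NormedAddCommGroup V] [InnerProductSpace ℝ V]
    [FiniteDimensional ℝ V]
    {J : ℕ} (Vj : Fin J → Type*) [∀ j, NormedAddCommGroup (Vj j)]
    [∀ j, InnerProductSpace ℝ (Vj j)] [∀ j, FiniteDimensional ℝ (Vj j)]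
    (S : V →ₗ[ℝ] V)
    (hSpd : ∀ v : V, v ≠ 0 → 0 < ⟪S v, v⟫)
    (Sj Sjinv : ∀ j, Vj j →ₗ[ℝ] Vj j)
    (hSjsa : ∀ j (x y : Vj j), ⟪Sj j x, y⟫ = ⟪x, Sj j y⟫)
    (hSjpd : ∀ j (x : Vj j), x ≠ 0 → 0 < ⟪Sj j x, x⟫)
    (hSjinv₂ : ∀ j, Sj j ∘ₗ Sjinv j = LinearMap.id)
    (R : ∀ j, Vj j →ₗ[ℝ] V)
    (B : V →ₗ[ℝ] V)
    (hB : B = ∑ j, (R j) ∘ₗ (Sjinv j) ∘ₗ (LinearMap.adjoint (R j)))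
    (C₁ : ℝ) (hC₁ : 0 < C₁)
    (hstable : ∀ v : V, ∃ u : ∀ j, Vj j,
      (∑ j, R j (u j)) = v ∧ (∑ j, ⟪Sj j (u j), u j⟫) ≤ C₁ * ⟪S v, v⟫) :
    ∀ μ : ℝ, Module.End.HasEigenvalue (B ∘ₗ S) μ → 1 / C₁ ≤ μ := by
  intro μ hμ
  obtain ⟨v, hv⟩ := hμ.exists_hasEigenvector
  have hSv : 0 < ⟪S v, v⟫ := hSpd v hv.2
  have hSj : ∀ j, (Sj j).IsPositive := fun j =>
    ⟨hSjsa j, fun x => by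
      rcases eq_or_ne x 0 with rfl | hx
      · simp
      · exact (hSjpd j x hx).le⟩
  obtain ⟨u, hu, henergy⟩ := hstable v
  have key := inner_sq_le_inner_preconditioner_mul (R := R) hSj hSjinv₂ (S v) henergy
  rw [← hB, ← LinearMap.comp_apply, hv.apply_eq_smul, inner_smul_right, hu] at key
  rw [div_le_iff₀ hC₁]
  exact le_of_mul_le_mul_right (by linarith) (pow_pos hSv 2)

/-- stable decomposition Σ aⱼ(vⱼ,vⱼ) ≤ C₁ a(v,v) implies
λ_min(BS) ≥ 1/C₁ in the additive Schwarz framework. -/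
theorem stmt_10 {V : Type*} [NormedAddCommGroup V] [InnerProductSpace ℝ V]
    [FiniteDimensional ℝ V]
    {J : ℕ} (Vj : Fin J → Type*) [∀ j, NormedAddCommGroup (Vj j)]
    [∀ j, InnerProductSpace ℝ (Vj j)] [∀ j, FiniteDimensional ℝ (Vj j)]
    (S : V →ₗ[ℝ] V)
    (hSsa : ∀ v w : V, ⟪S v, w⟫ = ⟪v, S w⟫) (hSpd : ∀ v : V, v ≠ 0 → 0 < ⟪S v, v⟫)
    (Sj Sjinv : ∀ j, Vj j →ₗ[ℝ] Vj j)
    (hSjsa : ∀ j (x y : Vj j), ⟪Sj j x, y⟫ = ⟪x, Sj j y⟫)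
    (hSjpd : ∀ j (x : Vj j), x ≠ 0 → 0 < ⟪Sj j x, x⟫)
    (hSjinv₁ : ∀ j, Sjinv j ∘ₗ Sj j = LinearMap.id)
    (hSjinv₂ : ∀ j, Sj j ∘ₗ Sjinv j = LinearMap.id)
    (R : ∀ j, Vj j →ₗ[ℝ] V)
    (hspan : (⨆ j, LinearMap.range (R j)) = ⊤)
    (B : V →ₗ[ℝ] V)
    (hB : B = ∑ j, (R j) ∘ₗ (Sjinv j) ∘ₗ (LinearMap.adjoint (R j)))
    (C₁ : ℝ) (hC₁ : 0 < C₁)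
    (hstable : ∀ v : V, ∃ u : ∀ j, Vj j,
      (∑ j, R j (u j)) = v ∧ (∑ j, ⟪Sj j (u j), u j⟫) ≤ C₁ * ⟪S v, v⟫) :
    ∀ μ : ℝ, Module.End.HasEigenvalue (B ∘ₗ S) μ → 1 / C₁ ≤ μ :=
  stmt_10_general Vj S hSpd Sj Sjinv hSjsa hSjpd hSjinv₂ R B hB C₁ hC₁ hstable
end

section
/- In the additive Schwarz setting, if every decomposition v = Σ_j R_j v_j satisfies a(v,v) ≤ C₂ Σ_j a_j(v_j,v_j), then λ_max(BS) ≤ C₂. -/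
/-! The local solves `uⱼ = Sⱼ⁻¹ Rⱼᵀ S v` form a decomposition of `B S v` whose local energy
`Σ aⱼ(uⱼ, uⱼ)` equals `a(v, B S v)`. The boundedness hypothesis applied to it gives
`a(BSv, BSv) ≤ C₂ a(v, BSv)`, and at an eigenvector `BSv = μ v` this reads `μ² ≤ C₂ μ`. -/

open scoped RealInnerProductSpace
open LinearMap (adjoint)

section EigenvalueBound

variable {V : Type*} [NormedAddCommGroup V] [InnerProductSpace ℝ V]

theorem Module.End.HasEigenvalue.le_of_energy_le {S T : V →ₗ[ℝ] V}
    (hSpd : ∀ v : V, v ≠ 0 → 0 < ⟪S v, v⟫) {C : ℝ} (hC : 0 < C)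
    (hT : ∀ v, ⟪S (T v), T v⟫ ≤ C * ⟪S v, T v⟫) {μ : ℝ}
    (hμ : Module.End.HasEigenvalue T μ) : μ ≤ C := by
  obtain ⟨v, hv⟩ := hμ.exists_hasEigenvector
  have hpos : 0 < ⟪S v, v⟫ := hSpd v hv.right
  have h := hT v
  rw [hv.apply_eq_smul, map_smul, real_inner_smul_left, real_inner_smul_right] at h
  rcases le_or_gt μ 0 with hμ0 | hμ0
  · linarith
  · nlinarith [mul_pos hμ0 hpos]

end EigenvalueBound

namespace AdditiveSchwarz

variable {V ι : Type*} [Fintype ι] [NormedAddCommGroup V] [InnerProductSpace ℝ V]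
  [FiniteDimensional ℝ V] {Vj : ι → Type*} [∀ j, NormedAddCommGroup (Vj j)]
  [∀ j, InnerProductSpace ℝ (Vj j)] [∀ j, FiniteDimensional ℝ (Vj j)]
  (Sjinv : ∀ j, Vj j →ₗ[ℝ] Vj j) (R : ∀ j, Vj j →ₗ[ℝ] V)

noncomputable def preconditioner : V →ₗ[ℝ] V :=
  ∑ j, R j ∘ₗ Sjinv j ∘ₗ adjoint (R j)

noncomputable def localSolution (w : V) (j : ι) : Vj j :=
  Sjinv j (adjoint (R j) w)

theorem sum_localSolution (w : V) :
    ∑ j, R j (localSolution Sjinv R w j) = preconditioner Sjinv R w := by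
  simp [preconditioner, localSolution, LinearMap.sum_apply]

theorem sum_inner_localSolution {Sj : ∀ j, Vj j →ₗ[ℝ] Vj j}
    (hSjinv : ∀ j, Sj j ∘ₗ Sjinv j = LinearMap.id) (w : V) :
    ∑ j, ⟪Sj j (localSolution Sjinv R w j), localSolution Sjinv R w j⟫
      = ⟪w, preconditioner Sjinv R w⟫ := by
  have hSj (j : ι) : Sj j (localSolution Sjinv R w j) = adjoint (R j) w :=
    LinearMap.congr_fun (hSjinv j) _
  simp only [hSj, LinearMap.adjoint_inner_left, ← inner_sum, sum_localSolution]

theorem energy_le_of_forall_decomposition {S : V →ₗ[ℝ] V} {Sj : ∀ j, Vj j →ₗ[ℝ] Vj j}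
    (hSjinv : ∀ j, Sj j ∘ₗ Sjinv j = LinearMap.id) {C : ℝ}
    (hbound : ∀ (v : V) (u : ∀ j, Vj j),
      (∑ j, R j (u j)) = v → ⟪S v, v⟫ ≤ C * ∑ j, ⟪Sj j (u j), u j⟫) (v : V) :
    ⟪S (preconditioner Sjinv R (S v)), preconditioner Sjinv R (S v)⟫
      ≤ C * ⟪S v, preconditioner Sjinv R (S v)⟫ := by
  rw [← sum_inner_localSolution Sjinv R hSjinv]
  exact hbound _ _ (sum_localSolution Sjinv R (S v))

end AdditiveSchwarz

theorem stmt_11_general {V : Type*} [NormedAddCommGroup V] [InnerProductSpace ℝ V]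
    [FiniteDimensional ℝ V]
    {J : ℕ} (Vj : Fin J → Type*) [∀ j, NormedAddCommGroup (Vj j)]
    [∀ j, InnerProductSpace ℝ (Vj j)] [∀ j, FiniteDimensional ℝ (Vj j)]
    (S : V →ₗ[ℝ] V)
    (hSpd : ∀ v : V, v ≠ 0 → 0 < ⟪S v, v⟫)
    (Sj Sjinv : ∀ j, Vj j →ₗ[ℝ] Vj j)
    (hSjinv₂ : ∀ j, Sj j ∘ₗ Sjinv j = LinearMap.id)
    (R : ∀ j, Vj j →ₗ[ℝ] V)
    (B : V →ₗ[ℝ] V)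
    (hB : B = ∑ j, (R j) ∘ₗ (Sjinv j) ∘ₗ (LinearMap.adjoint (R j)))
    (C₂ : ℝ) (hC₂ : 0 < C₂)
    (hbound : ∀ (v : V) (u : ∀ j, Vj j),
      (∑ j, R j (u j)) = v → ⟪S v, v⟫ ≤ C₂ * ∑ j, ⟪Sj j (u j), u j⟫) :
    ∀ μ : ℝ, Module.End.HasEigenvalue (B ∘ₗ S) μ → μ ≤ C₂ := by
  intro μ hμ
  subst hB
  exact hμ.le_of_energy_le hSpd hC₂
    (AdditiveSchwarz.energy_le_of_forall_decomposition Sjinv R hSjinv₂ hbound)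

/-- boundedness a(v,v) ≤ C₂ Σ aⱼ(vⱼ,vⱼ) for every decomposition
implies λ_max(BS) ≤ C₂ in the additive Schwarz framework. -/
theorem stmt_11 {V : Type*} [NormedAddCommGroup V] [InnerProductSpace ℝ V]
    [FiniteDimensional ℝ V]
    {J : ℕ} (Vj : Fin J → Type*) [∀ j, NormedAddCommGroup (Vj j)]
    [∀ j, InnerProductSpace ℝ (Vj j)] [∀ j, FiniteDimensional ℝ (Vj j)]
    (S : V →ₗ[ℝ] V)
    (hSsa : ∀ v w : V, ⟪S v, w⟫ = ⟪v, S w⟫) (hSpd : ∀ v : V, v ≠ 0 → 0 < ⟪S v, v⟫)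
    (Sj Sjinv : ∀ j, Vj j →ₗ[ℝ] Vj j)
    (hSjsa : ∀ j (x y : Vj j), ⟪Sj j x, y⟫ = ⟪x, Sj j y⟫)
    (hSjpd : ∀ j (x : Vj j), x ≠ 0 → 0 < ⟪Sj j x, x⟫)
    (hSjinv₁ : ∀ j, Sjinv j ∘ₗ Sj j = LinearMap.id)
    (hSjinv₂ : ∀ j, Sj j ∘ₗ Sjinv j = LinearMap.id)
    (R : ∀ j, Vj j →ₗ[ℝ] V)
    (hspan : (⨆ j, LinearMap.range (R j)) = ⊤)
    (B : V →ₗ[ℝ] V)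
    (hB : B = ∑ j, (R j) ∘ₗ (Sjinv j) ∘ₗ (LinearMap.adjoint (R j)))
    (C₂ : ℝ) (hC₂ : 0 < C₂)
    (hbound : ∀ (v : V) (u : ∀ j, Vj j),
      (∑ j, R j (u j)) = v → ⟪S v, v⟫ ≤ C₂ * ∑ j, ⟪Sj j (u j), u j⟫) :
    ∀ μ : ℝ, Module.End.HasEigenvalue (B ∘ₗ S) μ → μ ≤ C₂ :=
  stmt_11_general Vj S hSpd Sj Sjinv hSjinv₂ R B hB C₂ hC₂ hbound
end
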